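/- arXiv:1406.2137 — 10 statements merged into one kernel-verified Lean document; each statement's English description precedes it below -/
import Mathlib

section
/- Let Φ be a unit-norm frame for ℝ^N and suppose the distance d_Φ from Φ to the set of scalable frames (in Frobenius norm, viewing frames as N×M matrices) satisfies d_Φ < 1. Then the infimum is attained: there exists a scalable frame Φ̂ (an N×M matrix admitting a nonnegative diagonal C with Φ̂ C Φ̂^T a positive multiple of the identity, or equal to I) with ‖Φ − Φ̂‖_F = d_Φ. -/
open scoped BigOperators

/-- Frobenius norm of a matrix. -/
noncomputable def frobNorm {N M : ℕ} (A : Matrix (Fin N) (Fin M) ℝ) : ℝ :=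
  Real.sqrt (∑ i, ∑ j, (A i j) ^ 2)

/-- A matrix Ψ is scalable if there is a nonnegative diagonal C with Ψ C Ψᵀ = I. -/
def IsScalableMatrix {N M : ℕ} (Ψ : Matrix (Fin N) (Fin M) ℝ) : Prop :=
  ∃ c : Fin M → ℝ, (∀ i, 0 ≤ c i) ∧ Ψ * Matrix.diagonal c * Ψ.transpose = 1

/-!
If `Ψ * diagonal c * Ψᵀ = 1`, taking traces gives `∑ₖ cₖ ‖ψₖ‖² = N` for the columns `ψₖ` of `Ψ`.
When `Ψ` lies within `b < 1` of the unit-norm `Φ` in Frobenius norm, every column has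
`‖ψₖ‖ ≥ 1 - b`, so the scalings are bounded by `N / (1 - b)²`. The scalable matrices in the
closed ball of radius `b` around `Φ` are therefore the projection of a compact set of pairs
`(Ψ, c)`; choosing `d_Φ < b < 1`, the distance to `Φ` attains its infimum on this compact set.
-/

open Matrix Metric WithLp

attribute [local instance] Matrix.frobeniusNormedAddCommGroup Matrix.frobeniusNormedSpace

theorem Metric.exists_dist_eq_sInf_image_of_isCompact_inter_closedBall {X : Type*}
    [PseudoMetricSpace X] {S : Set X} (hS : S.Nonempty) {x : X} {b : ℝ}
    (hb : sInf (dist x '' S) < b) (hK : IsCompact (S ∩ closedBall x b)) :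
    ∃ y ∈ S, dist x y = sInf (dist x '' S) := by
  have hbdd : BddBelow (dist x '' S) := by
    refine ⟨0, ?_⟩
    rintro _ ⟨y, -, rfl⟩
    exact dist_nonneg
  obtain ⟨_, ⟨y₀, hy₀, rfl⟩, hy₀b⟩ := (csInf_lt_iff hbdd (hS.image _)).mp hb
  have hne : (S ∩ closedBall x b).Nonempty := ⟨y₀, hy₀, mem_closedBall'.mpr hy₀b.le⟩
  obtain ⟨y, ⟨hyS, hyb⟩, hmin⟩ :=
    hK.exists_isMinOn hne (continuous_const.dist continuous_id).continuousOn
  have hleast : IsLeast (dist x '' S) (dist x y) := by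
    refine ⟨⟨y, hyS, rfl⟩, ?_⟩
    rintro _ ⟨z, hzS, rfl⟩
    by_cases hzb : dist x z ≤ b
    · exact hmin ⟨hzS, mem_closedBall'.mpr hzb⟩
    · exact (mem_closedBall'.mp hyb).trans (not_le.mp hzb).le
  exact ⟨y, hyS, hleast.csInf_eq.symm⟩

namespace Matrix

variable {m n : Type*} [Fintype m] [Fintype n]

omit [Fintype n] in
theorem norm_toLp_transpose_apply_sq (A : Matrix m n ℝ) (j : n) :
    ‖toLp 2 (Aᵀ j)‖ ^ 2 = ∑ i, A i j ^ 2 := by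
  simp [EuclideanSpace.norm_sq_eq]

theorem norm_toLp_transpose_apply_le (A : Matrix m n ℝ) (j : n) :
    ‖toLp 2 (Aᵀ j)‖ ≤ ‖A‖ := by
  rw [← frobenius_norm_transpose A]
  exact PiLp.norm_apply_le (toLp 2 fun j => toLp 2 (Aᵀ j)) j

theorem norm_sub_norm_toLp_transpose_apply_le (A B : Matrix m n ℝ) (j : n) :
    ‖toLp 2 (Aᵀ j)‖ - ‖toLp 2 (Bᵀ j)‖ ≤ dist A B := by
  calc ‖toLp 2 (Aᵀ j)‖ - ‖toLp 2 (Bᵀ j)‖ ≤ ‖toLp 2 ((A - B)ᵀ j)‖ :=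
        norm_sub_norm_le _ _
    _ ≤ dist A B := by rw [dist_eq_norm]; exact norm_toLp_transpose_apply_le _ j

theorem sum_mul_norm_toLp_transpose_apply_sq_eq_card [DecidableEq m] [DecidableEq n]
    {Ψ : Matrix m n ℝ} {c : n → ℝ} (h : Ψ * diagonal c * Ψᵀ = 1) :
    ∑ k, c k * ‖toLp 2 (Ψᵀ k)‖ ^ 2 = Fintype.card m := by
  have htrace := congrArg trace h
  rw [trace_one, trace] at htrace
  simp only [← htrace, norm_toLp_transpose_apply_sq, Finset.mul_sum, diag, mul_apply,
    diagonal_apply, mul_ite, mul_zero, Finset.sum_ite_eq', Finset.mem_univ, if_true,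
    transpose_apply]
  rw [Finset.sum_comm]
  exact Finset.sum_congr rfl fun i _ => Finset.sum_congr rfl fun k _ => by ring

theorem mul_norm_toLp_transpose_apply_sq_le_card [DecidableEq m] [DecidableEq n]
    {Ψ : Matrix m n ℝ} {c : n → ℝ} (hc : ∀ k, 0 ≤ c k) (h : Ψ * diagonal c * Ψᵀ = 1) (j : n) :
    c j * ‖toLp 2 (Ψᵀ j)‖ ^ 2 ≤ Fintype.card m :=
  sum_mul_norm_toLp_transpose_apply_sq_eq_card h ▸
    Finset.single_le_sum (f := fun k => c k * ‖toLp 2 (Ψᵀ k)‖ ^ 2)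
      (fun k _ => mul_nonneg (hc k) (sq_nonneg _)) (Finset.mem_univ j)

theorem le_card_div_of_dist_le_of_mul_diagonal_mul_transpose_eq_one [DecidableEq m]
    [DecidableEq n] {Φ Ψ : Matrix m n ℝ} (hΦ : ∀ j, ‖toLp 2 (Φᵀ j)‖ = 1) {b : ℝ} (hb : b < 1)
    (hdist : dist Φ Ψ ≤ b) {c : n → ℝ} (hc : ∀ k, 0 ≤ c k) (h : Ψ * diagonal c * Ψᵀ = 1)
    (j : n) : c j ≤ Fintype.card m / (1 - b) ^ 2 := by
  have hcol : 1 - b ≤ ‖toLp 2 (Ψᵀ j)‖ := by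
    linarith [hΦ j, norm_sub_norm_toLp_transpose_apply_le Φ Ψ j]
  rw [le_div_iff₀ (pow_pos (sub_pos.mpr hb) 2)]
  calc c j * (1 - b) ^ 2 ≤ c j * ‖toLp 2 (Ψᵀ j)‖ ^ 2 := by gcongr; exact hc j
    _ ≤ (Fintype.card m : ℝ) := mul_norm_toLp_transpose_apply_sq_le_card hc h j

end Matrix

theorem frobNorm_eq_norm {N M : ℕ} (A : Matrix (Fin N) (Fin M) ℝ) : frobNorm A = ‖A‖ := by
  rw [frobNorm, frobenius_norm_def, Real.sqrt_eq_rpow]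
  simp

theorem exists_isScalableMatrix {N M : ℕ} (h : N ≤ M) :
    ∃ Ψ : Matrix (Fin N) (Fin M) ℝ, IsScalableMatrix Ψ := by
  refine ⟨(1 : Matrix (Fin M) (Fin M) ℝ).submatrix (Fin.castLE h) id, fun _ => 1,
    fun _ => zero_le_one, ?_⟩
  rw [diagonal_one, Matrix.mul_one, transpose_submatrix, transpose_one,
    ← submatrix_mul _ _ _ _ _ Function.bijective_id, Matrix.mul_one]
  exact submatrix_one_embedding (Fin.castLEEmb h)

theorem isCompact_setOf_isScalableMatrix_inter_closedBall {N M : ℕ}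
    {Φ : Matrix (Fin N) (Fin M) ℝ} (hΦ : ∀ j, ‖toLp 2 (Φᵀ j)‖ = 1) {b : ℝ} (hb : b < 1) :
    IsCompact ({Ψ | IsScalableMatrix Ψ} ∩ closedBall Φ b) := by
  set R : ℝ := N / (1 - b) ^ 2
  set K : Set (Matrix (Fin N) (Fin M) ℝ × (Fin M → ℝ)) :=
    {p | p.1 ∈ closedBall Φ b ∧ p.2 ∈ Set.Icc 0 (fun _ => R) ∧ p.1 * diagonal p.2 * p.1ᵀ = 1}
  have hKclosed : IsClosed K :=
    (isClosed_closedBall.preimage continuous_fst).inter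
      ((isClosed_Icc.preimage continuous_snd).inter (isClosed_eq (by fun_prop) continuous_const))
  have hK : IsCompact K :=
    ((isCompact_closedBall Φ b).prod isCompact_Icc).of_isClosed_subset hKclosed
      fun p hp => ⟨hp.1, hp.2.1⟩
  have hproj : {Ψ | IsScalableMatrix Ψ} ∩ closedBall Φ b = Prod.fst '' K := by
    ext Ψ
    constructor
    · rintro ⟨⟨c, hc, h⟩, hΨ⟩
      have hcR : ∀ j, c j ≤ R := fun j => by
        simpa using le_card_div_of_dist_le_of_mul_diagonal_mul_transpose_eq_one hΦ hb
          (mem_closedBall'.mp hΨ) hc h j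
      exact ⟨(Ψ, c), ⟨hΨ, ⟨hc, hcR⟩, h⟩, rfl⟩
    · rintro ⟨⟨Ψ, c⟩, ⟨hΨ, hc, h⟩, rfl⟩
      exact ⟨⟨c, hc.1, h⟩, hΨ⟩
  rw [hproj]
  exact hK.image continuous_fst

/-- If Φ is a unit-norm frame with d_Φ < 1, the distance to the set of scalable
frames is attained by some scalable frame Φ̂. -/
theorem dist_to_scalable_attained (N M : ℕ) (Φ : Matrix (Fin N) (Fin M) ℝ)
    (hunit : ∀ j, ∑ i, (Φ i j) ^ 2 = 1) (hframe : Φ.rank = N)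
    (dΦ : ℝ)
    (hd : dΦ = sInf {x : ℝ | ∃ Ψ : Matrix (Fin N) (Fin M) ℝ,
      IsScalableMatrix Ψ ∧ x = frobNorm (Φ - Ψ)})
    (hlt : dΦ < 1) :
    ∃ Ψ : Matrix (Fin N) (Fin M) ℝ, IsScalableMatrix Ψ ∧ frobNorm (Φ - Ψ) = dΦ := by
  have hNM : N ≤ M := by simpa [hframe] using Φ.rank_le_card_width
  have hcol : ∀ j, ‖toLp 2 (Φᵀ j)‖ = 1 := fun j => by
    rw [← Real.sqrt_sq (norm_nonneg _), norm_toLp_transpose_apply_sq, hunit j, Real.sqrt_one]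
  have himage : {x : ℝ | ∃ Ψ : Matrix (Fin N) (Fin M) ℝ,
      IsScalableMatrix Ψ ∧ x = frobNorm (Φ - Ψ)} = dist Φ '' {Ψ | IsScalableMatrix Ψ} := by
    ext x
    simp [frobNorm_eq_norm, dist_eq_norm, eq_comm]
  rw [himage] at hd
  obtain ⟨b, hdb, hb⟩ := exists_between hlt
  obtain ⟨Ψ, hΨ, hdist⟩ := exists_dist_eq_sInf_image_of_isCompact_inter_closedBall
    (exists_isScalableMatrix hNM) (hd ▸ hdb)
    (isCompact_setOf_isScalableMatrix_inter_closedBall hcol hb)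
  exact ⟨Ψ, hΨ, by rw [frobNorm_eq_norm, ← dist_eq_norm, hd]; exact hdist⟩
end

section
/- Let Φ be a unit-norm frame for ℝ^N with d_Φ < 1 and let Φ̂ = {φ̂_i} be a minimizer of the distance to the set of scalable frames. Then for every i, ⟨φ_i, φ̂_i⟩ = ‖φ̂_i‖². -/
open scoped BigOperators

/-- A family ψ is scalable if there are nonnegative c_i with Σ c_i ψ_i ψ_iᵀ = I. -/
def IsScalable {N M : ℕ} (ψ : Fin M → Fin N → ℝ) : Prop :=
  ∃ c : Fin M → ℝ, (∀ i, 0 ≤ c i) ∧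
    ∑ i, c i • Matrix.vecMulVec (ψ i) (ψ i) = (1 : Matrix (Fin N) (Fin N) ℝ)

/-- If Φ is unit-norm, d_Φ < 1 and Φ̂ minimizes the distance to the set of
scalable frames, then ⟨φ_i, φ̂_i⟩ = ‖φ̂_i‖² for every i. -/
theorem minimizer_inner_eq_norm_sq (N M : ℕ) (φ φhat : Fin M → Fin N → ℝ)
    (hunit : ∀ i, ∑ j, (φ i j) ^ 2 = 1)
    (hscal : IsScalable φhat)
    (hmin : ∀ ψ : Fin M → Fin N → ℝ, IsScalable ψ →
      ∑ i, ∑ j, (φ i j - φhat i j) ^ 2 ≤ ∑ i, ∑ j, (φ i j - ψ i j) ^ 2)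
    (hd : Real.sqrt (∑ i, ∑ j, (φ i j - φhat i j) ^ 2) < 1) :
    ∀ i, ∑ j, φ i j * φhat i j = ∑ j, (φhat i j) ^ 2 := by
  intro i
  set s : ℝ := ∑ j, φ i j * φhat i j with hs
  set q : ℝ := ∑ j, (φhat i j) ^ 2 with hq
  have hq0 : 0 ≤ q := Finset.sum_nonneg fun j _ => sq_nonneg _
  rcases eq_or_lt_of_le hq0 with hq0' | hqpos
  · -- q = 0 : all φhat i j = 0
    have hz : ∀ j ∈ Finset.univ, (φhat i j) ^ 2 = 0 := by
      intro j hj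
      have := (Finset.sum_eq_zero_iff_of_nonneg (fun j _ => sq_nonneg (φhat i j))).mp hq0'.symm
      exact this j hj
    have hz' : ∀ j, φhat i j = 0 := fun j => by
      have := hz j (Finset.mem_univ j); exact pow_eq_zero_iff (by norm_num) |>.mp this
    simp [hs, hq, hz']
  · -- q > 0
    -- total distance squared < 1
    have htotnn : 0 ≤ ∑ i, ∑ j, (φ i j - φhat i j) ^ 2 :=
      Finset.sum_nonneg fun i _ => Finset.sum_nonneg fun j _ => sq_nonneg _
    have htot : ∑ i, ∑ j, (φ i j - φhat i j) ^ 2 < 1 := by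
      nlinarith [Real.sq_sqrt htotnn, Real.sqrt_nonneg (∑ i, ∑ j, (φ i j - φhat i j) ^ 2)]
    have hterm : ∑ j, (φ i j - φhat i j) ^ 2 ≤ ∑ i, ∑ j, (φ i j - φhat i j) ^ 2 :=
      Finset.single_le_sum (f := fun i => ∑ j, (φ i j - φhat i j) ^ 2)
        (fun k _ => Finset.sum_nonneg fun j _ => sq_nonneg _) (Finset.mem_univ i)
    have expand : ∀ β : ℝ, ∑ j, (φ i j - β * φhat i j) ^ 2 = 1 - 2 * β * s + β ^ 2 * q := by
      intro β
      have h1 : ∀ j ∈ Finset.univ, (φ i j - β * φhat i j) ^ 2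
          = (φ i j) ^ 2 - 2 * β * (φ i j * φhat i j) + β ^ 2 * (φhat i j) ^ 2 := by
        intro j _; ring
      rw [Finset.sum_congr rfl h1]
      rw [Finset.sum_add_distrib, Finset.sum_sub_distrib, ← Finset.mul_sum, ← Finset.mul_sum,
        hunit i, ← hs, ← hq]
    have hexp1 : ∑ j, (φ i j - φhat i j) ^ 2 = 1 - 2 * s + q := by
      have := expand 1; simpa using this
    have hspos : 0 < s := by
      have : 1 - 2 * s + q < 1 := by rw [← hexp1]; exact lt_of_le_of_lt hterm htot
      nlinarith
    -- the perturbed frame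
    set α : ℝ := s / q with hα
    set ψ : Fin M → Fin N → ℝ := Function.update φhat i (fun j => α * φhat i j) with hψ
    have hψscal : IsScalable ψ := by
      obtain ⟨c, hc0, hcsum⟩ := hscal
      refine ⟨Function.update c i ((q / s) ^ 2 * c i), ?_, ?_⟩
      · intro k
        by_cases hk : k = i
        · subst hk; simp only [Function.update_self]
          exact mul_nonneg (sq_nonneg _) (hc0 _)
        · simpa [Function.update_of_ne hk] using hc0 k
      · rw [← hcsum]
        apply Finset.sum_congr rfl
        intro k _
        by_cases hk : k = i
        · subst hk
          simp only [hψ, Function.update_self]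
          ext a b
          simp only [Matrix.smul_apply, Matrix.vecMulVec_apply, smul_eq_mul]
          have hsne : s ≠ 0 := ne_of_gt hspos
          have hqne : q ≠ 0 := ne_of_gt hqpos
          have hqq : q ^ 2 * q⁻¹ ^ 2 = 1 := by field_simp
          field_simp
          linear_combination (c k * s ^ 2 * φhat k a * φhat k b) * hqq
        · simp [hψ, Function.update_of_ne hk]
    have h := hmin ψ hψscal
    rw [← Finset.add_sum_erase _ _ (Finset.mem_univ i),
        ← Finset.add_sum_erase _ (fun k => ∑ j, (φ k j - ψ k j) ^ 2) (Finset.mem_univ i)] at h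
    have heq : ∑ k ∈ Finset.univ.erase i, ∑ j, (φ k j - φhat k j) ^ 2
        = ∑ k ∈ Finset.univ.erase i, ∑ j, (φ k j - ψ k j) ^ 2 := by
      apply Finset.sum_congr rfl
      intro k hk
      have hki : k ≠ i := (Finset.mem_erase.mp hk).1
      simp [hψ, Function.update_of_ne hki]
    have hkey : ∑ j, (φ i j - φhat i j) ^ 2 ≤ ∑ j, (φ i j - ψ i j) ^ 2 := by linarith
    have hψi : ∑ j, (φ i j - ψ i j) ^ 2 = 1 - 2 * α * s + α ^ 2 * q := by
      rw [hψ]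
      simpa using expand α
    rw [hexp1, hψi] at hkey
    have hqne : q ≠ 0 := ne_of_gt hqpos
    have hmul := mul_le_mul_of_nonneg_right hkey (le_of_lt hqpos)
    have hd2 : α * s * q = s ^ 2 := by rw [hα]; field_simp
    have hd3 : α ^ 2 * q * q = s ^ 2 := by rw [hα]; field_simp
    have hq2 : (q - s) ^ 2 ≤ 0 := by nlinarith
    have : q - s = 0 := by nlinarith [sq_nonneg (q - s)]
    linarith
end

section
/- Under the same hypotheses (d_Φ < 1, Φ̂ a minimizer of the distance to scalable frames), each φ̂_i satisfies ‖φ̂_i‖ ≤ 1, and ‖φ̂_i‖ = 1 if and only if φ̂_i = φ_i. -/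
open scoped BigOperators

/-- If Φ is unit-norm, d_Φ < 1 and Φ̂ minimizes the distance to the set of
scalable frames, then ‖φ̂_i‖ ≤ 1, with equality iff φ̂_i = φ_i. -/
theorem minimizer_norm_le_one (N M : ℕ) (φ φhat : Fin M → Fin N → ℝ)
    (hunit : ∀ i, ∑ j, (φ i j) ^ 2 = 1)
    (hscal : IsScalable φhat)
    (hmin : ∀ ψ : Fin M → Fin N → ℝ, IsScalable ψ →
      ∑ i, ∑ j, (φ i j - φhat i j) ^ 2 ≤ ∑ i, ∑ j, (φ i j - ψ i j) ^ 2)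
    (hd : Real.sqrt (∑ i, ∑ j, (φ i j - φhat i j) ^ 2) < 1) :
    ∀ i, Real.sqrt (∑ j, (φhat i j) ^ 2) ≤ 1 ∧
      (Real.sqrt (∑ j, (φhat i j) ^ 2) = 1 ↔ φhat i = φ i) := by
  intro i
  set a : ℝ := ∑ j, φ i j * φhat i j with ha
  set b : ℝ := ∑ j, (φhat i j) ^ 2 with hbdef
  have hb : 0 ≤ b := Finset.sum_nonneg fun j _ => sq_nonneg _
  -- Step 1: scaling the i-th vector preserves scalability, so by minimality:
  have H : ∀ t : ℝ, t ≠ 0 →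
      ∑ j, (φ i j - φhat i j) ^ 2 ≤ ∑ j, (φ i j - t * φhat i j) ^ 2 := by
    intro t ht
    set ψ : Fin M → Fin N → ℝ := Function.update φhat i (t • φhat i) with hψ
    have hψi : ∀ j, ψ i j = t * φhat i j := by
      intro j; simp [hψ, Function.update_self]
    have hψne : ∀ m, m ≠ i → ψ m = φhat m := by
      intro m hm; simp [hψ, Function.update_of_ne hm]
    have hscalψ : IsScalable ψ := by
      obtain ⟨c, hc, hsum⟩ := hscal
      refine ⟨Function.update c i (c i / t ^ 2), ?_, ?_⟩
      · intro m
        by_cases hm : m = i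
        · subst hm
          simp only [Function.update_self]
          exact div_nonneg (hc _) (sq_nonneg t)
        · simpa [Function.update_of_ne hm] using hc m
      · rw [← hsum]
        apply Finset.sum_congr rfl
        intro m _
        by_cases hm : m = i
        · subst hm
          simp only [Function.update_self]
          ext x y
          simp only [Matrix.smul_apply, Matrix.vecMulVec_apply, smul_eq_mul]
          rw [hψi x, hψi y]
          field_simp
        · simp [Function.update_of_ne hm, hψne m hm]
    have hcmp := hmin ψ hscalψ
    have hsplit : ∀ (f : Fin M → ℝ),
        ∑ m, f m = f i + ∑ m ∈ Finset.univ.erase i, f m := by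
      intro f
      exact (Finset.add_sum_erase _ f (Finset.mem_univ i)).symm
    rw [hsplit (fun m => ∑ j, (φ m j - φhat m j) ^ 2),
        hsplit (fun m => ∑ j, (φ m j - ψ m j) ^ 2)] at hcmp
    have heq : ∑ m ∈ Finset.univ.erase i, (∑ j, (φ m j - ψ m j) ^ 2)
        = ∑ m ∈ Finset.univ.erase i, (∑ j, (φ m j - φhat m j) ^ 2) := by
      apply Finset.sum_congr rfl
      intro m hm
      rw [hψne m (Finset.mem_erase.mp hm).1]
    rw [heq] at hcmp
    have : ∑ j, (φ i j - ψ i j) ^ 2 = ∑ j, (φ i j - t * φhat i j) ^ 2 := by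
      apply Finset.sum_congr rfl
      intro j _
      rw [hψi j]
    linarith [hcmp, this.symm.le, this.le]
  -- Step 2: expand the quadratic
  have expand : ∀ t : ℝ,
      ∑ j, (φ i j - t * φhat i j) ^ 2 = 1 - 2 * t * a + t ^ 2 * b := by
    intro t
    calc ∑ j, (φ i j - t * φhat i j) ^ 2
        = ∑ j, ((φ i j) ^ 2 - 2 * t * (φ i j * φhat i j)
            + t ^ 2 * (φhat i j) ^ 2) := by
          apply Finset.sum_congr rfl; intro j _; ring
      _ = ∑ j, (φ i j) ^ 2 - 2 * t * ∑ j, (φ i j * φhat i j)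
            + t ^ 2 * ∑ j, (φhat i j) ^ 2 := by
          rw [Finset.sum_add_distrib, Finset.sum_sub_distrib, Finset.mul_sum,
            Finset.mul_sum]
      _ = 1 - 2 * t * a + t ^ 2 * b := by rw [hunit i]
  have e1 : ∑ j, (φ i j - φhat i j) ^ 2 = 1 - 2 * a + b := by
    simpa using expand 1
  have G : ∀ t : ℝ, t ≠ 0 → 0 ≤ b * t ^ 2 - 2 * a * t + (2 * a - b) := by
    intro t ht
    have := H t ht
    rw [e1, expand t] at this
    nlinarith
  -- Step 3: a = b
  have key : a = b := by
    by_cases hb0 : b = 0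
    · have hz : ∀ j ∈ Finset.univ, (φhat i j) ^ 2 = 0 :=
        (Finset.sum_eq_zero_iff_of_nonneg fun j _ => sq_nonneg _).mp hb0
      have : a = 0 := by
        apply Finset.sum_eq_zero
        intro j _
        have := pow_eq_zero_iff (n := 2) (by norm_num) |>.mp (hz j (Finset.mem_univ j))
        rw [this, mul_zero]
      rw [this, hb0]
    · have hbpos : 0 < b := lt_of_le_of_ne hb (Ne.symm hb0)
      by_cases ha0 : a = 0
      · exfalso
        have := G (1/2) (by norm_num)
        nlinarith
      · have := G (a / b) (div_ne_zero ha0 hb0)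
        have h2 : b * (a / b) = a := by field_simp
        nlinarith [sq_nonneg (a - b)]
  have hdiff : ∑ j, (φ i j - φhat i j) ^ 2 = 1 - b := by rw [e1, key]; ring
  have hnn : 0 ≤ ∑ j, (φ i j - φhat i j) ^ 2 :=
    Finset.sum_nonneg fun j _ => sq_nonneg _
  have hble : b ≤ 1 := by linarith
  constructor
  · exact Real.sqrt_le_one.mpr hble
  · constructor
    · intro hs
      have hb1 : b = 1 := by
        have := Real.sqrt_eq_one.mp hs
        exact this
      have hzero : ∑ j, (φ i j - φhat i j) ^ 2 = 0 := by rw [hdiff, hb1]; ring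
      funext j
      have := (Finset.sum_eq_zero_iff_of_nonneg
        (fun j (_ : j ∈ Finset.univ) => sq_nonneg (φ i j - φhat i j))).mp hzero j
        (Finset.mem_univ j)
      have h0 : φ i j - φhat i j = 0 :=
        pow_eq_zero_iff (n := 2) (by norm_num) |>.mp this
      linarith
    · intro hfe
      have : b = 1 := by
        rw [hbdef]
        calc ∑ j, (φhat i j) ^ 2 = ∑ j, (φ i j) ^ 2 := by rw [hfe]
          _ = 1 := hunit i
      rw [this, Real.sqrt_one]
end

section
/- For any unit-norm frame Φ = {φ_i}_{i=1}^M in ℝ^N, the squared distance D_Φ² := min over nonnegative c_1,...,c_M of ‖Σ_i c_i φ_i φ_i^T − I‖_F² satisfies D_Φ² ≤ N − M²/FP(Φ), where FP(Φ) = Σ_{i,j} |⟨φ_i, φ_j⟩|² is the frame potential. -/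
open scoped BigOperators

/-- Squared Frobenius norm. -/
noncomputable def frobSq {N : ℕ} (A : Matrix (Fin N) (Fin N) ℝ) : ℝ :=
  ∑ i, ∑ j, (A i j) ^ 2

lemma frobSq_nonneg {N : ℕ} (A : Matrix (Fin N) (Fin N) ℝ) : 0 ≤ frobSq A := by
  unfold frobSq
  positivity

lemma sum_swap_FP (N M : ℕ) (φ : Fin M → Fin N → ℝ) :
    ∑ a, ∑ b, (∑ i, φ i a * φ i b) ^ 2 = ∑ i, ∑ j, (∑ k, φ i k * φ j k) ^ 2 := by
  have h : ∀ (f : Fin M → Fin N → ℝ),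
      ∑ a, ∑ b, (∑ i, f i a * f i b) ^ 2
        = ∑ a, ∑ b, ∑ i, ∑ j, (f i a * f i b) * (f j a * f j b) := by
    intro f
    refine Finset.sum_congr rfl fun a _ => Finset.sum_congr rfl fun b _ => ?_
    rw [sq, Finset.sum_mul_sum]
  rw [h]
  have h2 : ∑ i, ∑ j, (∑ k, φ i k * φ j k) ^ 2
      = ∑ i, ∑ j, ∑ a, ∑ b, (φ i a * φ j a) * (φ i b * φ j b) := by
    refine Finset.sum_congr rfl fun i _ => Finset.sum_congr rfl fun j _ => ?_
    rw [sq, Finset.sum_mul_sum]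
  rw [h2]
  have swap4 : ∀ (g : Fin N → Fin N → Fin M → Fin M → ℝ),
      ∑ a, ∑ b, ∑ i, ∑ j, g a b i j = ∑ i, ∑ j, ∑ a, ∑ b, g a b i j := by
    intro g
    calc ∑ a, ∑ b, ∑ i, ∑ j, g a b i j
        = ∑ a, ∑ i, ∑ b, ∑ j, g a b i j :=
          Finset.sum_congr rfl fun a _ => Finset.sum_comm
      _ = ∑ i, ∑ a, ∑ b, ∑ j, g a b i j := Finset.sum_comm
      _ = ∑ i, ∑ a, ∑ j, ∑ b, g a b i j :=
          Finset.sum_congr rfl fun i _ => Finset.sum_congr rfl fun a _ => Finset.sum_comm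
      _ = ∑ i, ∑ j, ∑ a, ∑ b, g a b i j :=
          Finset.sum_congr rfl fun i _ => Finset.sum_comm
  rw [swap4 (fun a b i j => (φ i a * φ i b) * (φ j a * φ j b))]
  refine Finset.sum_congr rfl fun i _ => Finset.sum_congr rfl fun j _ =>
    Finset.sum_congr rfl fun a _ => Finset.sum_congr rfl fun b _ => ?_
  ring

lemma frobSq_const (N M : ℕ) (φ : Fin M → Fin N → ℝ)
    (hunit : ∀ i, ∑ j, (φ i j) ^ 2 = 1) (t : ℝ) :
    frobSq (∑ i, t • Matrix.vecMulVec (φ i) (φ i) - 1)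
      = t ^ 2 * (∑ i, ∑ j, (∑ k, φ i k * φ j k) ^ 2) - 2 * t * M + N := by
  unfold frobSq
  have hent : ∀ a b : Fin N,
      (∑ i, t • Matrix.vecMulVec (φ i) (φ i) - 1) a b
        = t * (∑ i, φ i a * φ i b) - (if a = b then (1:ℝ) else 0) := by
    intro a b
    simp [Matrix.sub_apply, Matrix.sum_apply, Matrix.smul_apply, Matrix.vecMulVec_apply,
      Matrix.one_apply, Finset.mul_sum]
  have key : ∀ a b : Fin N,
      ((∑ i, t • Matrix.vecMulVec (φ i) (φ i) - 1) a b) ^ 2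
        = t ^ 2 * (∑ i, φ i a * φ i b) ^ 2
          - 2 * t * (∑ i, φ i a * φ i b) * (if a = b then (1:ℝ) else 0)
          + (if a = b then (1:ℝ) else 0) := by
    intro a b
    rw [hent]
    by_cases h : a = b <;> simp [h] <;> ring
  calc ∑ a, ∑ b, ((∑ i, t • Matrix.vecMulVec (φ i) (φ i) - 1) a b) ^ 2
      = ∑ a, ∑ b, (t ^ 2 * (∑ i, φ i a * φ i b) ^ 2
          - 2 * t * (∑ i, φ i a * φ i b) * (if a = b then (1:ℝ) else 0)
          + (if a = b then (1:ℝ) else 0)) := by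
        exact Finset.sum_congr rfl fun a _ => Finset.sum_congr rfl fun b _ => key a b
    _ = t ^ 2 * (∑ a, ∑ b, (∑ i, φ i a * φ i b) ^ 2)
          - 2 * t * (∑ a, ∑ i, φ i a * φ i a) + N := by
        simp only [Finset.sum_add_distrib, Finset.sum_sub_distrib, Finset.mul_sum,
          Finset.sum_ite_eq', Finset.mem_univ, if_true, mul_one]
        simp [Finset.mul_sum]
    _ = t ^ 2 * (∑ i, ∑ j, (∑ k, φ i k * φ j k) ^ 2) - 2 * t * M + N := by
        rw [sum_swap_FP]
        congr 2
        rw [Finset.sum_comm]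
        have : ∀ i : Fin M, ∑ a, φ i a * φ i a = 1 := by
          intro i; simpa [sq] using hunit i
        simp [this]

/-- For a unit-norm frame Φ, D_Φ² ≤ N − M²/FP(Φ), where FP(Φ) is the frame potential. -/
theorem DPhi_sq_le_frame_potential_bound (N M : ℕ) (φ : Fin M → Fin N → ℝ)
    (hunit : ∀ i, ∑ j, (φ i j) ^ 2 = 1) :
    sInf {x : ℝ | ∃ c : Fin M → ℝ, (∀ i, 0 ≤ c i) ∧
        x = frobSq (∑ i, c i • Matrix.vecMulVec (φ i) (φ i) - 1)}
      ≤ (N : ℝ) - (M : ℝ) ^ 2 / (∑ i, ∑ j, (∑ k, φ i k * φ j k) ^ 2) := by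
  set FP : ℝ := ∑ i, ∑ j, (∑ k, φ i k * φ j k) ^ 2 with hFP
  have hbdd : BddBelow {x : ℝ | ∃ c : Fin M → ℝ, (∀ i, 0 ≤ c i) ∧
        x = frobSq (∑ i, c i • Matrix.vecMulVec (φ i) (φ i) - 1)} := by
    refine ⟨0, fun x hx => ?_⟩
    obtain ⟨c, _, rfl⟩ := hx
    exact frobSq_nonneg _
  rcases Nat.eq_zero_or_pos M with hM | hM
  · subst hM
    have hmem : (N : ℝ) ∈ {x : ℝ | ∃ c : Fin 0 → ℝ, (∀ i, 0 ≤ c i) ∧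
        x = frobSq (∑ i, c i • Matrix.vecMulVec (φ i) (φ i) - 1)} := by
      refine ⟨fun i => 0, fun i => le_refl 0, ?_⟩
      have := frobSq_const N 0 φ hunit 0
      simpa using this.symm
    have h := csInf_le hbdd hmem
    simpa using h
  · have hFPpos : 0 < FP := by
      have h1 : (M : ℝ) ≤ FP := by
        rw [hFP]
        calc (M : ℝ) = ∑ i : Fin M, (1 : ℝ) := by simp
          _ = ∑ i : Fin M, (∑ k, φ i k * φ i k) ^ 2 := by
              refine Finset.sum_congr rfl fun i _ => ?_
              have : ∑ k, φ i k * φ i k = 1 := by simpa [sq] using hunit i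
              rw [this]; norm_num
          _ ≤ ∑ i, ∑ j, (∑ k, φ i k * φ j k) ^ 2 := by
              refine Finset.sum_le_sum fun i _ => ?_
              exact Finset.single_le_sum (f := fun j => (∑ k, φ i k * φ j k) ^ 2)
                (fun j _ => sq_nonneg _) (Finset.mem_univ i)
      have : (0:ℝ) < M := by exact_mod_cast hM
      linarith
    set t : ℝ := M / FP with ht
    have hmem : frobSq (∑ i, t • Matrix.vecMulVec (φ i) (φ i) - 1)
        ∈ {x : ℝ | ∃ c : Fin M → ℝ, (∀ i, 0 ≤ c i) ∧
        x = frobSq (∑ i, c i • Matrix.vecMulVec (φ i) (φ i) - 1)} := by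
      exact ⟨fun _ => t, fun _ => div_nonneg (Nat.cast_nonneg M) hFPpos.le, rfl⟩
    have hval : frobSq (∑ i, t • Matrix.vecMulVec (φ i) (φ i) - 1)
        = (N : ℝ) - (M : ℝ) ^ 2 / FP := by
      rw [frobSq_const N M φ hunit t, ht]
      field_simp
      ring
    have := csInf_le hbdd hmem
    rwa [hval] at this
end

section
/- Let Φ = {φ_i}_{i=1}^M be a unit-norm frame in ℝ^N and let Ĉ = diag(ĉ_1,...,ĉ_M) with ĉ_i ≥ 0 be a minimizer of ‖Φ C Φ^T − I‖_F over nonnegative diagonal C. Then Σ_i ĉ_i = N − D_Φ², where D_Φ is the minimal value. -/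
open scoped BigOperators

lemma frobSq_sub_one {N : ℕ} (A : Matrix (Fin N) (Fin N) ℝ) :
    frobSq (A - 1) = frobSq A - 2 * (∑ j, A j j) + N := by
  unfold frobSq
  have h : ∀ i j : Fin N, ((A - 1) i j) ^ 2
      = A i j ^ 2 - 2 * (if j = i then A i j else 0) + (if j = i then (1:ℝ) else 0) := by
    intro i j
    by_cases hij : j = i
    · subst hij; simp [Matrix.one_apply]; ring
    · simp [Matrix.one_apply, Ne.symm hij, hij]
  simp only [h, Finset.sum_add_distrib, Finset.sum_sub_distrib, ← Finset.mul_sum,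
    Finset.sum_ite_eq', Finset.mem_univ, if_true, Finset.sum_const, Finset.card_univ,
    Fintype.card_fin, nsmul_eq_mul, mul_one]

/-- If Ĉ = diag(ĉ) minimizes ‖Φ C Φᵀ − I‖_F over nonnegative diagonal C,
then Σ ĉ_i = N − D_Φ². -/
theorem sum_minimizing_scalars (N M : ℕ) (φ : Fin M → Fin N → ℝ)
    (hunit : ∀ i, ∑ j, (φ i j) ^ 2 = 1)
    (chat : Fin M → ℝ) (hchat : ∀ i, 0 ≤ chat i)
    (hmin : ∀ c : Fin M → ℝ, (∀ i, 0 ≤ c i) →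
      frobSq (∑ i, chat i • Matrix.vecMulVec (φ i) (φ i) - 1)
        ≤ frobSq (∑ i, c i • Matrix.vecMulVec (φ i) (φ i) - 1)) :
    ∑ i, chat i = (N : ℝ) - frobSq (∑ i, chat i • Matrix.vecMulVec (φ i) (φ i) - 1) := by
  set S : Matrix (Fin N) (Fin N) ℝ := ∑ i, chat i • Matrix.vecMulVec (φ i) (φ i) with hS
  set a : ℝ := frobSq S with ha
  set b : ℝ := ∑ j, S j j with hb
  -- trace equals sum of chat
  have htr : b = ∑ i, chat i := by
    rw [hb]
    have : ∀ j : Fin N, S j j = ∑ i, chat i * (φ i j * φ i j) := by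
      intro j
      rw [hS]
      simp [Matrix.sum_apply, Matrix.vecMulVec_apply]
    simp only [this]
    rw [Finset.sum_comm]
    refine Finset.sum_congr rfl fun i _ => ?_
    rw [← Finset.mul_sum]
    have : ∑ j, φ i j * φ i j = ∑ j, (φ i j) ^ 2 := by
      refine Finset.sum_congr rfl fun j _ => (sq (φ i j)).symm
    rw [this, hunit i, mul_one]
  have hbnn : 0 ≤ b := htr ▸ Finset.sum_nonneg fun i _ => hchat i
  have hann : 0 ≤ a := Finset.sum_nonneg fun i _ => Finset.sum_nonneg fun j _ => sq_nonneg _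
  -- scaling gives a family of feasible points
  have hscale : ∀ α : ℝ, 0 ≤ α → a - 2 * b + N ≤ α ^ 2 * a - 2 * (α * b) + N := by
    intro α hα
    have hfeas := hmin (fun i => α * chat i) (fun i => mul_nonneg hα (hchat i))
    have hsum : (∑ i, (α * chat i) • Matrix.vecMulVec (φ i) (φ i)) = α • S := by
      rw [hS, Finset.smul_sum]
      refine Finset.sum_congr rfl fun i _ => ?_
      rw [smul_smul]
    rw [hsum] at hfeas
    have h1 : frobSq (S - 1) = a - 2 * b + N := frobSq_sub_one S
    have h2 : frobSq (α • S - 1) = α ^ 2 * a - 2 * (α * b) + N := by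
      rw [frobSq_sub_one]
      have e1 : frobSq (α • S) = α ^ 2 * a := by
        rw [ha]
        unfold frobSq
        simp only [Finset.mul_sum]
        refine Finset.sum_congr rfl fun i _ => Finset.sum_congr rfl fun j _ => ?_
        simp [mul_pow]
      have e2 : (∑ j, (α • S) j j) = α * b := by
        rw [hb, Finset.mul_sum]
        refine Finset.sum_congr rfl fun j _ => ?_
        simp
      rw [e1, e2]
    rw [h1, h2] at hfeas
    exact hfeas
  -- conclude a = b
  have hab : a = b := by
    rcases eq_or_lt_of_le hann with h0 | h0
    · have h2 := hscale 2 (by norm_num)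
      have h0' := hscale 0 le_rfl
      nlinarith
    · have h := hscale (b / a) (div_nonneg hbnn h0.le)
      have hane : a ≠ 0 := ne_of_gt h0
      have hx : (b / a) ^ 2 * a - 2 * ((b / a) * b) = -(b ^ 2) / a := by
        field_simp; ring
      have h' : a - 2 * b ≤ -(b ^ 2) / a := by rw [← hx]; linarith
      rw [le_div_iff₀ h0] at h'
      nlinarith [sq_nonneg (a - b)]
  have hfin : frobSq (S - 1) = a - 2 * b + N := frobSq_sub_one S
  rw [← htr, hfin, hab]
  ring
end

section
/- Let λ_1,...,λ_N be positive reals with Σ_i λ_i = N and V = (Π_i λ_i)^{1/2} ≤ 1. If D ≥ 0 satisfies D² ≤ N − N²/(Σ_i λ_i²), then V^{4/N} ≤ N(N−1−D²)/((N−1)(N−D²)) (assuming N ≥ 2 and D² < N). -/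
open scoped BigOperators

/-!
AM–GM applied to the `N(N-1)` products `λᵢλⱼ` with `i ≠ j` gives
`(∏ λᵢ)^(2/N) ≤ (N² - ∑ λᵢ²) / (N(N-1))`, since their product is `(∏ λᵢ)^(2(N-1))` and their sum is
`(∑ λᵢ)² - ∑ λᵢ²`. The hypothesis on `D` says exactly `∑ λᵢ² ≥ N² / (N - D²)`, and substituting this
lower bound gives the claim.
-/

namespace Finset

variable {ι M : Type*} (s : Finset ι)

theorem prod_offDiag_fst [CommMonoid M] (f : ι → M) :
    ∏ p ∈ s.offDiag, f p.1 = ∏ i ∈ s, f i ^ (#s - 1) := by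
  classical
  rw [prod_finset_product _ s (fun i => s.erase i) fun p => by
    rw [mem_offDiag, mem_erase]; tauto]
  exact prod_congr rfl fun i hi => by simp only [prod_const, card_erase_of_mem hi]

theorem prod_offDiag_snd [CommMonoid M] (f : ι → M) :
    ∏ p ∈ s.offDiag, f p.2 = ∏ i ∈ s, f i ^ (#s - 1) := by
  classical
  rw [prod_finset_product_right _ s (fun i => s.erase i) fun p => by
    rw [mem_offDiag, mem_erase]; tauto]
  exact prod_congr rfl fun i hi => by simp only [prod_const, card_erase_of_mem hi]

theorem prod_offDiag_mul [CommMonoid M] (f : ι → M) :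
    ∏ p ∈ s.offDiag, f p.1 * f p.2 = ((∏ i ∈ s, f i) ^ (#s - 1)) ^ 2 := by
  rw [prod_mul_distrib, prod_offDiag_fst, prod_offDiag_snd, prod_pow, sq]

theorem sum_offDiag_mul [CommRing M] (f : ι → M) :
    ∑ p ∈ s.offDiag, f p.1 * f p.2 = (∑ i ∈ s, f i) ^ 2 - ∑ i ∈ s, f i ^ 2 := by
  classical
  rw [sq, sum_mul_sum, ← sum_product', ← diag_union_offDiag, sum_union (disjoint_diag_offDiag s),
    sum_diag]
  simp only [sq]
  ring

end Finset

namespace Real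

open Finset

theorem prod_rpow_two_div_card_le {ι : Type*} (s : Finset ι) (hs : 2 ≤ #s) (f : ι → ℝ)
    (hf : ∀ i ∈ s, 0 ≤ f i) :
    (∏ i ∈ s, f i) ^ ((2 : ℝ) / #s)
      ≤ ((∑ i ∈ s, f i) ^ 2 - ∑ i ∈ s, f i ^ 2) / (#s * (#s - 1)) := by
  classical
  have h2 : (2 : ℝ) ≤ #s := by exact_mod_cast hs
  have hcard : (#s.offDiag : ℝ) = #s * (#s - 1) := by
    rw [offDiag_card, Nat.cast_sub (Nat.le_mul_self _), Nat.cast_mul]; ring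
  have hpos : (0 : ℝ) < #s * (#s - 1) := by nlinarith
  have amgm := geom_mean_le_arith_mean s.offDiag (fun _ => 1) (fun p => f p.1 * f p.2)
    (fun _ _ => zero_le_one) (by rwa [sum_const, nsmul_one, hcard])
    (fun p hp => by rw [mem_offDiag] at hp; exact mul_nonneg (hf _ hp.1) (hf _ hp.2.1))
  simp only [rpow_one, one_mul, sum_const, nsmul_one, prod_offDiag_mul, sum_offDiag_mul,
    hcard] at amgm
  convert amgm using 1
  have hP : 0 ≤ ∏ i ∈ s, f i := prod_nonneg hf
  rw [← pow_mul, ← rpow_natCast, ← rpow_mul hP]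
  congr 1
  have hs1 : (#s : ℝ) - 1 ≠ 0 := by linarith
  rw [Nat.cast_mul, Nat.cast_sub (by omega : 1 ≤ #s), Nat.cast_one]
  field_simp
  ring

end Real

theorem sq_sub_div_mul_sub_one_le {n d s : ℝ} (hn : 1 < n) (hd : d < n)
    (h : n ^ 2 ≤ (n - d) * s) :
    (n ^ 2 - s) / (n * (n - 1)) ≤ n * (n - 1 - d) / ((n - 1) * (n - d)) := by
  rw [div_le_div_iff₀ (by nlinarith) (by nlinarith)]
  nlinarith [mul_le_mul_of_nonneg_left h (by linarith : (0 : ℝ) ≤ n - 1)]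

theorem V_upper_bound_of_D_general (N : ℕ) (hN : 2 ≤ N) (lam : Fin N → ℝ)
    (hpos : ∀ i, 0 < lam i) (hsum : ∑ i, lam i = (N : ℝ))
    (V : ℝ) (hV : V = Real.sqrt (∏ i, lam i))
    (D : ℝ) (hDN : D ^ 2 < N)
    (hD : D ^ 2 ≤ (N : ℝ) - (N : ℝ) ^ 2 / (∑ i, (lam i) ^ 2)) :
    V ^ ((4 : ℝ) / N)
      ≤ (N : ℝ) * ((N : ℝ) - 1 - D ^ 2) / (((N : ℝ) - 1) * ((N : ℝ) - D ^ 2)) := by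
  have hN1 : (1 : ℝ) < N := by exact_mod_cast hN
  have hVpow : V ^ ((4 : ℝ) / N) = (∏ i, lam i) ^ ((2 : ℝ) / N) := by
    rw [hV, Real.sqrt_eq_rpow, ← Real.rpow_mul (Finset.prod_nonneg fun i _ => (hpos i).le)]
    ring_nf
  have hsq_pos : 0 < ∑ i, lam i ^ 2 :=
    Finset.sum_pos (fun i _ => pow_pos (hpos i) 2) ⟨⟨0, by omega⟩, Finset.mem_univ _⟩
  have hsq_ge : (N : ℝ) ^ 2 ≤ (N - D ^ 2) * ∑ i, lam i ^ 2 := by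
    rw [← div_le_iff₀ hsq_pos]
    linarith
  have amgm := Real.prod_rpow_two_div_card_le Finset.univ (by simpa using hN) lam
    fun i _ => (hpos i).le
  rw [Finset.card_univ, Fintype.card_fin, hsum] at amgm
  rw [hVpow]
  exact amgm.trans (sq_sub_div_mul_sub_one_le hN1 hDN hsq_ge)

/-- Upper bound of V in terms of D: if λ_i > 0, Σ λ_i = N, V = (Π λ_i)^{1/2} ≤ 1,
D ≥ 0 with D² ≤ N − N²/(Σ λ_i²) and D² < N, N ≥ 2, then
V^{4/N} ≤ N(N−1−D²)/((N−1)(N−D²)). -/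
theorem V_upper_bound_of_D (N : ℕ) (hN : 2 ≤ N) (lam : Fin N → ℝ)
    (hpos : ∀ i, 0 < lam i) (hsum : ∑ i, lam i = (N : ℝ))
    (V : ℝ) (hV : V = Real.sqrt (∏ i, lam i)) (hV1 : V ≤ 1)
    (D : ℝ) (hD0 : 0 ≤ D) (hDN : D ^ 2 < N)
    (hD : D ^ 2 ≤ (N : ℝ) - (N : ℝ) ^ 2 / (∑ i, (lam i) ^ 2)) :
    V ^ ((4 : ℝ) / N)
      ≤ (N : ℝ) * ((N : ℝ) - 1 - D ^ 2) / (((N : ℝ) - 1) * ((N : ℝ) - D ^ 2)) :=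
  V_upper_bound_of_D_general N hN lam hpos hsum V hV D hDN hD
end

section
/- Let Φ = {φ_1,...,φ_N} be a set of N unit vectors in ℝ^N. If min_{‖d‖=1} max_i |⟨d, φ_i⟩| ≥ 1/√N, then the matrix Φ (with columns φ_i) is orthogonal (unitary over ℝ). -/
open scoped BigOperators

open Matrix Finset

private lemma sum_sq_pos_of_ne_zero {N : ℕ} {v : Fin N → ℝ} (hv : v ≠ 0) :
    0 < ∑ i, v i ^ 2 := by
  obtain ⟨i, hi⟩ := Function.ne_iff.mp hv
  exact Finset.sum_pos' (fun k _ => sq_nonneg _)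
    ⟨i, Finset.mem_univ i, lt_of_le_of_ne (sq_nonneg _) (Ne.symm (pow_ne_zero 2 hi))⟩

private lemma sign_mul_sign_sum {N : ℕ} {i j : Fin N} (hij : i ≠ j) :
    ∑ f : Fin N → Bool, (if f i then (1:ℝ) else -1) * (if f j then (1:ℝ) else -1) = 0 := by
  classical
  set g : (Fin N → Bool) → ℝ :=
    fun f => (if f i then (1:ℝ) else -1) * (if f j then (1:ℝ) else -1) with hg
  have hinv : Function.Involutive (fun f : Fin N → Bool => Function.update f i (!f i)) := by
    intro f
    funext k
    by_cases hk : k = i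
    · subst hk; simp
    · simp [Function.update_of_ne hk]
  have hneg : ∀ f, g (Function.update f i (!f i)) = - g f := by
    intro f
    simp only [hg, Function.update_self, Function.update_of_ne (Ne.symm hij)]
    cases f i <;> cases f j <;> norm_num
  have hsum : ∑ f : Fin N → Bool, g f = ∑ f : Fin N → Bool, g (hinv.toPerm _ f) :=
    (Equiv.sum_comp (hinv.toPerm _) g).symm
  have hsum2 : ∑ f : Fin N → Bool, g (hinv.toPerm _ f) = -∑ f : Fin N → Bool, g f := by
    rw [← Finset.sum_neg_distrib]
    exact Finset.sum_congr rfl fun f _ => hneg f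
  have : ∑ f : Fin N → Bool, g f = 0 := by linarith [hsum.trans hsum2]
  simpa [hg] using this

/-- If Φ ∈ ℝ^{N×N} has unit-norm columns and for every unit vector d there is
a column φ_i with |⟨d, φ_i⟩| ≥ 1/√N, then Φ is orthogonal. -/
theorem orthogonal_of_min_max_bound (N : ℕ) (Φ : Matrix (Fin N) (Fin N) ℝ)
    (hunit : ∀ j, ∑ i, (Φ i j) ^ 2 = 1)
    (hbound : ∀ d : Fin N → ℝ, ∑ i, (d i) ^ 2 = 1 →
      ∃ j, |∑ i, d i * Φ i j| ≥ 1 / Real.sqrt N) :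
    Φ.transpose * Φ = 1 := by
  classical
  rcases Nat.eq_zero_or_pos N with hN0 | hN
  · subst hN0
    exact Subsingleton.elim _ _
  have hsqrtN : (0:ℝ) < Real.sqrt N := Real.sqrt_pos.mpr (by exact_mod_cast hN)
  -- main consequence of hbound for unnormalized vectors
  have main : ∀ v : Fin N → ℝ, v ≠ 0 →
      ∃ j, |(Φᵀ *ᵥ v) j| / Real.sqrt (∑ i, v i ^ 2) ≥ 1 / Real.sqrt N := by
    intro v hv
    have hpos := sum_sq_pos_of_ne_zero hv
    set c := Real.sqrt (∑ i, v i ^ 2) with hc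
    have hcpos : 0 < c := Real.sqrt_pos.mpr hpos
    have hc2 : c ^ 2 = ∑ i, v i ^ 2 := Real.sq_sqrt hpos.le
    have hd : ∑ i, (v i / c) ^ 2 = 1 := by
      have : ∀ i, (v i / c) ^ 2 = v i ^ 2 / c ^ 2 := fun i => div_pow _ _ _
      rw [Finset.sum_congr rfl fun i _ => this i, ← Finset.sum_div, ← hc2,
        div_self (by positivity)]
    obtain ⟨j, hj⟩ := hbound (fun i => v i / c) hd
    refine ⟨j, ?_⟩
    have hmv : ∑ i, (v i / c) * Φ i j = (Φᵀ *ᵥ v) j / c := by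
      rw [Matrix.mulVec, dotProduct, Finset.sum_div]
      exact Finset.sum_congr rfl fun i _ => by
        rw [Matrix.transpose_apply]; ring
    rw [hmv, abs_div, abs_of_pos hcpos] at hj
    exact hj
  -- Φ is invertible
  have hdet : Φ.det ≠ 0 := by
    intro hdet
    obtain ⟨v, hv0, hv⟩ := Matrix.exists_mulVec_eq_zero_iff.mpr
      (show Φᵀ.det = 0 by rwa [Matrix.det_transpose])
    obtain ⟨j, hj⟩ := main v hv0
    rw [hv] at hj
    simp only [Pi.zero_apply, abs_zero, zero_div, ge_iff_le] at hj
    have : (0:ℝ) < 1 / Real.sqrt N := by positivity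
    linarith
  have hIsU : IsUnit Φ.det := isUnit_iff_ne_zero.mpr hdet
  set Q := Φ⁻¹ with hQdef
  have hQΦ : Q * Φ = 1 := Matrix.nonsing_inv_mul Φ hIsU
  have hΦQ : Φ * Q = 1 := Matrix.mul_nonsing_inv Φ hIsU
  set A : Matrix (Fin N) (Fin N) ℝ := Φᵀ * Φ with hAdef
  set B : Matrix (Fin N) (Fin N) ℝ := Q * Qᵀ with hBdef
  have hAB : A * B = 1 := by
    calc A * B = Φᵀ * (Φ * Q) * Qᵀ := by rw [hAdef, hBdef]; noncomm_ring
    _ = Φᵀ * Qᵀ := by rw [hΦQ, Matrix.mul_one]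
    _ = (Q * Φ)ᵀ := (Matrix.transpose_mul _ _).symm
    _ = 1 := by rw [hQΦ, Matrix.transpose_one]
  have hBA : B * A = 1 := by
    calc B * A = Q * (Qᵀ * Φᵀ) * Φ := by rw [hAdef, hBdef]; noncomm_ring
    _ = Q * (Φ * Q)ᵀ * Φ := by rw [Matrix.transpose_mul]
    _ = Q * Φ := by rw [hΦQ, Matrix.transpose_one, Matrix.mul_one]
    _ = 1 := hQΦ
  -- for every sign vector, the quadratic form of B is at most N
  have key : ∀ f : Fin N → Bool,
      ∑ j, ∑ k, B j k * ((if f j then (1:ℝ) else -1) * (if f k then (1:ℝ) else -1)) ≤ N := by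
    intro f
    set s : Fin N → ℝ := fun i => if f i then (1:ℝ) else -1 with hs
    set w : Fin N → ℝ := Qᵀ *ᵥ s with hw
    have hws : Φᵀ *ᵥ w = s := by
      rw [hw, Matrix.mulVec_mulVec, ← Matrix.transpose_mul, hQΦ, Matrix.transpose_one,
        Matrix.one_mulVec]
    have hwne : w ≠ 0 := by
      intro h
      have hs0 : s = 0 := by rw [← hws, h, Matrix.mulVec_zero]
      have := congrFun hs0 ⟨0, hN⟩
      simp only [hs, Pi.zero_apply] at this
      split at this <;> norm_num at this
    obtain ⟨j, hj⟩ := main w hwne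
    rw [hws] at hj
    have hsj : |s j| = 1 := by
      simp only [hs]; split <;> norm_num
    rw [hsj] at hj
    have hwpos := sum_sq_pos_of_ne_zero hwne
    have hcpos : 0 < Real.sqrt (∑ i, w i ^ 2) := Real.sqrt_pos.mpr hwpos
    -- from 1/√(Σw²) ≥ 1/√N deduce Σ w² ≤ N
    have hle : Real.sqrt (∑ i, w i ^ 2) ≤ Real.sqrt N :=
      le_of_one_div_le_one_div hsqrtN hj
    have hwN : ∑ i, w i ^ 2 ≤ (N : ℝ) := by
      calc ∑ i, w i ^ 2 = Real.sqrt (∑ i, w i ^ 2) ^ 2 := (Real.sq_sqrt hwpos.le).symm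
        _ ≤ Real.sqrt N ^ 2 := by
            apply pow_le_pow_left₀ (Real.sqrt_nonneg _) hle
        _ = N := Real.sq_sqrt (by positivity)
    -- quadratic form identity
    have hid : ∑ i, w i ^ 2 = ∑ j, ∑ k, B j k * (s j * s k) := by
      have lhs : ∑ i, w i ^ 2
          = ∑ i, ∑ j, ∑ k, (Q j i * s j) * (Q k i * s k) := by
        refine Finset.sum_congr rfl fun i _ => ?_
        rw [hw, Matrix.mulVec, dotProduct, sq, Finset.sum_mul_sum]
        simp only [Matrix.transpose_apply]
      have rhs : ∑ j, ∑ k, B j k * (s j * s k)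
          = ∑ j, ∑ k, ∑ i, (Q j i * s j) * (Q k i * s k) := by
        refine Finset.sum_congr rfl fun j _ => Finset.sum_congr rfl fun k _ => ?_
        rw [hBdef, Matrix.mul_apply, Finset.sum_mul]
        refine Finset.sum_congr rfl fun i _ => ?_
        rw [Matrix.transpose_apply]; ring
      rw [lhs, rhs, Finset.sum_comm]
      exact Finset.sum_congr rfl fun j _ => Finset.sum_comm
    rw [← hid]
    exact hwN
  -- summing over all sign vectors gives a trace bound on B
  have htraceB : ∑ j, B j j ≤ (N : ℝ) := by
    have hswap : ∑ f : Fin N → Bool,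
        ∑ j, ∑ k, B j k * ((if f j then (1:ℝ) else -1) * (if f k then (1:ℝ) else -1))
        = (2:ℝ) ^ N * ∑ j, B j j := by
      rw [Finset.sum_comm]
      have : ∀ j : Fin N,
          ∑ f : Fin N → Bool, ∑ k, B j k * ((if f j then (1:ℝ) else -1) * (if f k then (1:ℝ) else -1))
          = (2:ℝ) ^ N * B j j := by
        intro j
        rw [Finset.sum_comm]
        have inner : ∀ k : Fin N,
            ∑ f : Fin N → Bool, B j k * ((if f j then (1:ℝ) else -1) * (if f k then (1:ℝ) else -1))
            = if k = j then (2:ℝ) ^ N * B j j else 0 := by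
          intro k
          rw [← Finset.mul_sum]
          by_cases hkj : k = j
          · subst hkj
            have : ∑ f : Fin N → Bool, ((if f k then (1:ℝ) else -1) * (if f k then (1:ℝ) else -1))
                = (2:ℝ) ^ N := by
              have : ∀ f : Fin N → Bool,
                  ((if f k then (1:ℝ) else -1) * (if f k then (1:ℝ) else -1)) = 1 := by
                intro f; split <;> norm_num
              rw [Finset.sum_congr rfl fun f _ => this f, Finset.sum_const, nsmul_eq_mul,
                mul_one, Finset.card_univ, Fintype.card_fun]
              simp
            rw [this, if_pos rfl]
            ring
          · rw [sign_mul_sign_sum (fun h => hkj (by rw [h]))]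
            · rw [mul_zero, if_neg hkj]
        rw [Finset.sum_congr rfl fun k _ => inner k, Finset.sum_ite_eq' Finset.univ j
          (fun _ => (2:ℝ) ^ N * B j j)]
        simp
      rw [Finset.sum_congr rfl fun j _ => this j, ← Finset.mul_sum]
    have hsumle : ∑ f : Fin N → Bool,
        (∑ j, ∑ k, B j k * ((if f j then (1:ℝ) else -1) * (if f k then (1:ℝ) else -1)))
        ≤ ∑ _f : Fin N → Bool, (N : ℝ) := Finset.sum_le_sum fun f _ => key f
    rw [hswap, Finset.sum_const, Finset.card_univ, Fintype.card_fun, nsmul_eq_mul] at hsumle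
    have h2pos : (0:ℝ) < (2:ℝ) ^ N := by positivity
    have : ((Fintype.card Bool : ℝ)) ^ (Fintype.card (Fin N)) = (2:ℝ) ^ N := by
      simp
    have hcast : ((Fintype.card Bool ^ Fintype.card (Fin N) : ℕ) : ℝ) = (2:ℝ) ^ N := by
      push_cast
      simp
    rw [hcast] at hsumle
    exact le_of_mul_le_mul_left hsumle h2pos
  -- trace of A is N
  have htrA : ∑ i, A i i = (N : ℝ) := by
    have : ∀ i, A i i = 1 := by
      intro i
      rw [hAdef, Matrix.mul_apply, ← hunit i]
      exact Finset.sum_congr rfl fun k _ => by rw [Matrix.transpose_apply, sq]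
    rw [Finset.sum_congr rfl fun i _ => this i, Finset.sum_const, Finset.card_univ,
      Fintype.card_fin, nsmul_eq_mul, mul_one]
  -- the Gram defect
  set G : Matrix (Fin N) (Fin N) ℝ := (A - 1) * Q with hGdef
  have hGGT : G * Gᵀ = A + B - 1 - 1 := by
    have hAt : Aᵀ = A := by rw [hAdef, Matrix.transpose_mul, Matrix.transpose_transpose]
    have hGt : Gᵀ = Qᵀ * (A - 1) := by
      rw [hGdef, Matrix.transpose_mul, Matrix.transpose_sub, Matrix.transpose_one, hAt]
    rw [hGdef, hGt]
    have h1 : (A - 1) * Q * (Qᵀ * (A - 1)) = (A - 1) * B * (A - 1) := by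
      rw [hBdef]; noncomm_ring
    rw [h1]
    have h2 : (A - 1) * B = 1 - B := by rw [sub_mul, one_mul, hAB]
    rw [h2, sub_mul, one_mul, mul_sub, hBA, mul_one]
    abel
  have htr : ∑ i, ∑ j, G i j ^ 2 ≤ 0 := by
    have h1 : ∀ i, (G * Gᵀ) i i = ∑ j, G i j ^ 2 := by
      intro i
      rw [Matrix.mul_apply]
      exact Finset.sum_congr rfl fun j _ => by rw [Matrix.transpose_apply, sq]
    calc ∑ i, ∑ j, G i j ^ 2 = ∑ i, (G * Gᵀ) i i :=
          Finset.sum_congr rfl fun i _ => (h1 i).symm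
      _ = ∑ i, (A i i + B i i - 1 - 1) := by
          rw [hGGT]
          exact Finset.sum_congr rfl fun i _ => by
            simp [Matrix.sub_apply, Matrix.add_apply, Matrix.one_apply_eq]
      _ = (∑ i, A i i) + (∑ i, B i i) - N - N := by
          rw [Finset.sum_sub_distrib, Finset.sum_sub_distrib, Finset.sum_add_distrib,
            Finset.sum_const, Finset.card_univ, Fintype.card_fin, nsmul_eq_mul, mul_one]
      _ ≤ (N : ℝ) + N - N - N := by linarith [htraceB, htrA.le, htrA.ge]
      _ = 0 := by ring
  have hsum0 : ∑ i, ∑ j, G i j ^ 2 = 0 :=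
    le_antisymm htr (Finset.sum_nonneg fun i _ => Finset.sum_nonneg fun j _ => sq_nonneg _)
  have hG0 : G = 0 := by
    ext i j
    have h1 := (Finset.sum_eq_zero_iff_of_nonneg
      (fun i _ => Finset.sum_nonneg fun j _ => sq_nonneg (G i j))).mp hsum0 i (Finset.mem_univ i)
    have h2 := (Finset.sum_eq_zero_iff_of_nonneg
      (fun j _ => sq_nonneg (G i j))).mp h1 j (Finset.mem_univ j)
    have := (pow_eq_zero_iff two_ne_zero).mp h2
    simpa using this
  have hfin : A - 1 = 0 := by
    have : A - 1 = G * Φ := by rw [hGdef, mul_assoc, hQΦ, Matrix.mul_one]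
    rw [this, hG0, Matrix.zero_mul]
  exact sub_eq_zero.mp hfin
end

section
/- Let Φ ∈ ℝ^{N×N} be an invertible matrix with unit-norm columns that is not orthogonal. Then there exists a vector d ∈ ℝ^N with ‖d‖ > 1 and a sign vector a with a_i ∈ {±1/√N} for all i such that Φ^T d = a. -/
/-!
Let `A = ΦᵀΦ`, so `tr A = N` and `d = Φ⁻ᵀ a` has `‖d‖² = aᵀ A⁻¹ a`. Averaged over all sign
vectors `ε ∈ {±1}ᴺ`, the quadratic form `εᵀ A⁻¹ ε` equals `tr A⁻¹`, so it suffices to show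
`tr A⁻¹ > N`. This follows from `A + A⁻¹ - 2 = (A - 1) A⁻¹ (A - 1)`, a positive semidefinite
matrix that is nonzero when `A ≠ 1`, so `tr A + tr A⁻¹ > 2N`.
-/

open scoped BigOperators

open Matrix

section SignVectors

variable {n R : Type*} [Fintype n] [DecidableEq n]

theorem sum_units_int_pi_apply_mul_apply (i j : n) :
    ∑ ε : n → ℤˣ, ((ε i * ε j : ℤˣ) : ℤ) =
      if i = j then (Fintype.card (n → ℤˣ) : ℤ) else 0 := by
  split_ifs with hij
  · simp [hij, Int.units_mul_self]
  -- flipping the `i`-th sign negates every summand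
  set flip : n → ℤˣ := Pi.mulSingle i (-1)
  have hflip : ∀ ε : n → ℤˣ,
      (((flip * ε) i * (flip * ε) j : ℤˣ) : ℤ) = -((ε i * ε j : ℤˣ) : ℤ) := by
    intro ε
    simp [flip, Ne.symm hij]
  have := Equiv.sum_comp (Equiv.mulLeft flip) fun ε : n → ℤˣ => ((ε i * ε j : ℤˣ) : ℤ)
  simp only [Equiv.coe_mulLeft, hflip, Finset.sum_neg_distrib] at this
  linarith

variable [CommRing R]

def signVec (ε : n → ℤˣ) : n → R := fun i => ((ε i : ℤ) : R)

theorem sum_signVec_dotProduct_mulVec (B : Matrix n n R) :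
    ∑ ε : n → ℤˣ, signVec ε ⬝ᵥ B *ᵥ signVec ε = Fintype.card (n → ℤˣ) • B.trace := by
  have hentry : ∀ i j : n, ∑ ε : n → ℤˣ, signVec ε i * (B i j * signVec ε j)
      = if i = j then Fintype.card (n → ℤˣ) • B i i else 0 := by
    intro i j
    have := congrArg (Int.cast : ℤ → R) (sum_units_int_pi_apply_mul_apply i j)
    simp only [Int.cast_sum, Units.val_mul, Int.cast_mul] at this
    simp only [signVec, mul_left_comm _ (B i j), ← Finset.mul_sum, this]
    split_ifs with hij
    · subst hij; simp [nsmul_eq_mul, mul_comm]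
    · simp
  simp only [dotProduct, mulVec, Finset.mul_sum]
  rw [Finset.sum_comm]
  simp_rw [Finset.sum_comm (γ := n → ℤˣ), hentry]
  simp [trace, Finset.smul_sum]

theorem exists_lt_signVec_dotProduct_mulVec [LinearOrder R] [IsStrictOrderedRing R]
    {B : Matrix n n R} {c : R} (hc : c < B.trace) :
    ∃ ε : n → ℤˣ, c < signVec ε ⬝ᵥ B *ᵥ signVec ε := by
  have hsum : ∑ _ε : n → ℤˣ, c < ∑ ε : n → ℤˣ, signVec ε ⬝ᵥ B *ᵥ signVec ε := by
    rw [sum_signVec_dotProduct_mulVec, Finset.sum_const, Finset.card_univ]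
    exact nsmul_lt_nsmul_right Fintype.card_ne_zero hc
  obtain ⟨ε, -, hε⟩ := Finset.exists_lt_of_sum_lt hsum
  exact ⟨ε, hε⟩

end SignVectors

namespace Matrix

section PosDef

open scoped ComplexOrder

variable {n 𝕜 : Type*} [Fintype n] [DecidableEq n] [RCLike 𝕜]

theorem PosDef.two_mul_card_lt_trace_add_trace_inv {A : Matrix n n 𝕜} (hA : A.PosDef)
    (hA1 : A ≠ 1) : 2 * (Fintype.card n : 𝕜) < A.trace + A⁻¹.trace := by
  have hAinv : A * A⁻¹ = 1 := mul_nonsing_inv A ((isUnit_iff_isUnit_det A).mp hA.isUnit)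
  have hinvA : A⁻¹ * A = 1 := nonsing_inv_mul A ((isUnit_iff_isUnit_det A).mp hA.isUnit)
  set C := A - 1
  have hC : Cᴴ = C := by simp [C, hA.isHermitian.eq]
  have hidentity : Cᴴ * A⁻¹ * C = A + A⁻¹ - 1 - 1 := by
    rw [hC]
    simp only [C, sub_mul, mul_sub, hAinv, hinvA, one_mul, mul_one]
    abel
  have hpsd : (Cᴴ * A⁻¹ * C).PosSemidef := hA.inv.posSemidef.conjTranspose_mul_mul_same C
  have hne : Cᴴ * A⁻¹ * C ≠ 0 := by
    intro h0
    -- `C` commutes with `A`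
    have hCC : Cᴴ * C = A * (Cᴴ * A⁻¹ * C) := by
      simp only [hC, C, sub_mul, mul_sub, ← mul_assoc, hAinv, one_mul, mul_one]
    rw [h0, mul_zero] at hCC
    exact hA1 (sub_eq_zero.mp (conjTranspose_mul_self_eq_zero.mp hCC))
  have htr : 0 < (Cᴴ * A⁻¹ * C).trace :=
    hpsd.trace_nonneg.lt_of_ne (Ne.symm (mt hpsd.trace_eq_zero_iff.mp hne))
  rwa [hidentity, trace_sub, trace_sub, trace_add, trace_one, sub_sub, sub_pos,
    ← two_mul] at htr

end PosDef

theorem mulVec_dotProduct_mulVec_self {n R : Type*} [Fintype n] [CommSemiring R]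
    (P : Matrix n n R) (v : n → R) : P *ᵥ v ⬝ᵥ P *ᵥ v = v ⬝ᵥ (Pᵀ * P) *ᵥ v := by
  rw [← mulVec_mulVec, dotProduct_mulVec v, vecMul_transpose]

theorem card_lt_trace_inv_transpose_mul_self {n : Type*} [Fintype n] [DecidableEq n]
    {Φ : Matrix n n ℝ} (hunit : ∀ j, ∑ i, Φ i j ^ 2 = 1) (hinv : IsUnit Φ.det)
    (hΦ : Φᵀ * Φ ≠ 1) : (Fintype.card n : ℝ) < (Φᵀ * Φ)⁻¹.trace := by
  have hpos : (Φᵀ * Φ).PosDef := by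
    simpa [conjTranspose_eq_transpose_of_trivial] using
      PosDef.conjTranspose_mul_self Φ
        (mulVec_injective_of_isUnit ((isUnit_iff_isUnit_det Φ).mpr hinv))
  have htrace : (Φᵀ * Φ).trace = Fintype.card n := by
    simp [trace, mul_apply, ← sq, hunit]
  linarith [hpos.two_mul_card_lt_trace_add_trace_inv hΦ]

end Matrix

/-- For a non-orthogonal invertible matrix Φ with unit-norm columns, there exist
d with ‖d‖ > 1 and a with |a_i| = 1/√N such that Φᵀ d = a. -/
theorem exists_long_vector_sign_pattern (N : ℕ) (Φ : Matrix (Fin N) (Fin N) ℝ)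
    (hunit : ∀ j, ∑ i, (Φ i j) ^ 2 = 1)
    (hinv : IsUnit Φ.det)
    (hnotunitary : Φ.transpose * Φ ≠ 1) :
    ∃ (d a : Fin N → ℝ),
      (∀ i, a i = 1 / Real.sqrt N ∨ a i = -(1 / Real.sqrt N)) ∧
      Φ.transpose.mulVec d = a ∧ 1 < ∑ i, (d i) ^ 2 := by
  have hN : 0 < N :=
    Nat.pos_of_ne_zero fun hN => hnotunitary (by subst hN; exact Subsingleton.elim _ _)
  have htrace : (N : ℝ) < (Φᵀ * Φ)⁻¹.trace := by
    simpa using card_lt_trace_inv_transpose_mul_self hunit hinv hnotunitary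
  obtain ⟨ε, hε⟩ := exists_lt_signVec_dotProduct_mulVec htrace
  set a : Fin N → ℝ := (√N)⁻¹ • signVec ε
  refine ⟨(Φᵀ)⁻¹ *ᵥ a, a, fun i => ?_, ?_, ?_⟩
  · rcases Int.units_eq_one_or (ε i) with h | h <;> simp [a, signVec, h]
  · rw [mulVec_mulVec, mul_nonsing_inv _ (by rwa [det_transpose]), one_mulVec]
  · have hnormSq : ∑ i, ((Φᵀ)⁻¹ *ᵥ a) i ^ 2 = a ⬝ᵥ (Φᵀ * Φ)⁻¹ *ᵥ a := by
      rw [Matrix.mul_inv_rev, ← transpose_transpose Φ⁻¹, transpose_nonsing_inv,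
        ← mulVec_dotProduct_mulVec_self]
      simp only [dotProduct, sq]
    rw [hnormSq]
    simp only [a, mulVec_smul, dotProduct_smul, smul_dotProduct, smul_eq_mul]
    rwa [← mul_assoc, ← mul_inv, Real.mul_self_sqrt N.cast_nonneg, ← div_eq_inv_mul,
      one_lt_div (by positivity)]
end

section
/- A frame with N unit-norm vectors in ℝ^N is scalable if and only if it is an orthonormal basis. -/
open scoped BigOperators Matrix

/-- A frame of N unit-norm vectors in ℝ^N is scalable iff it is an orthonormal
basis (i.e. the vectors are pairwise orthonormal). -/
theorem scalable_iff_orthonormal_basis (N : ℕ) (φ : Fin N → Fin N → ℝ)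
    (hunit : ∀ i, ∑ j, (φ i j) ^ 2 = 1)
    (hspan : Submodule.span ℝ (Set.range φ) = ⊤) :
    (∃ c : Fin N → ℝ, (∀ i, 0 ≤ c i) ∧
        ∑ i, c i • Matrix.vecMulVec (φ i) (φ i) = (1 : Matrix (Fin N) (Fin N) ℝ))
      ↔ (∀ i j, ∑ k, φ i k * φ j k = if i = j then 1 else 0) := by
  constructor
  · rintro ⟨c, hc, hsum⟩
    set M : Matrix (Fin N) (Fin N) ℝ :=
      Matrix.of (fun i j => Real.sqrt (c i) * φ i j) with hM
    have hMTM : Mᵀ * M = 1 := by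
      rw [← hsum]
      ext j k
      simp only [Matrix.mul_apply, Matrix.sum_apply, Matrix.smul_apply,
        Matrix.vecMulVec_apply, hM, Matrix.transpose_apply, Matrix.of_apply,
        smul_eq_mul]
      apply Finset.sum_congr rfl
      intro i _
      rw [show Real.sqrt (c i) * φ i j * (Real.sqrt (c i) * φ i k)
          = (Real.sqrt (c i) * Real.sqrt (c i)) * (φ i j * φ i k) by ring,
        Real.mul_self_sqrt (hc i)]
    have hMMT : M * Mᵀ = 1 := mul_eq_one_comm.mp hMTM
    have key : ∀ i j, Real.sqrt (c i) * Real.sqrt (c j) * (∑ k, φ i k * φ j k)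
        = if i = j then 1 else 0 := by
      intro i j
      have h := congrFun (congrFun hMMT i) j
      simp only [Matrix.mul_apply, Matrix.transpose_apply, hM, Matrix.of_apply,
        Matrix.one_apply] at h
      rw [← h, Finset.mul_sum]
      apply Finset.sum_congr rfl
      intro k _
      ring
    have hnorm : ∀ i, ∑ k, φ i k * φ i k = 1 := by
      intro i
      have := hunit i
      simpa [pow_two] using this
    have hcone : ∀ i, c i = 1 := by
      intro i
      have h := key i i
      rw [hnorm i, mul_one, Real.mul_self_sqrt (hc i), if_pos rfl] at h
      exact h
    intro i j
    by_cases hij : i = j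
    · subst hij; simp [hnorm i]
    · have h := key i j
      rw [hcone i, hcone j, Real.sqrt_one, one_mul, one_mul, if_neg hij] at h
      rw [h, if_neg hij]
  · intro horth
    refine ⟨fun _ => 1, fun _ => zero_le_one, ?_⟩
    set M : Matrix (Fin N) (Fin N) ℝ := Matrix.of φ with hM
    have hMMT : M * Mᵀ = 1 := by
      ext i j
      simpa [Matrix.mul_apply, Matrix.transpose_apply, hM, Matrix.one_apply]
        using horth i j
    have hMTM : Mᵀ * M = 1 := mul_eq_one_comm.mpr hMMT
    ext j k
    have h := congrFun (congrFun hMTM j) k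
    simp only [Matrix.mul_apply, Matrix.transpose_apply, hM, Matrix.of_apply] at h
    simpa [Matrix.sum_apply, Matrix.vecMulVec_apply] using h
end

section
/- Suppose Φ = {φ_i}_{i=1}^M is a strictly scalable unit-norm frame for ℝ^N (there exist c_i > 0 with Σ_i c_i φ_i φ_i^T = I) and the rank-one matrices {φ_i φ_i^T}_{i=1}^M span the space Sym_N of symmetric N×N matrices. Then there exists ε > 0 such that every Ψ = {ψ_i}_{i=1}^M ⊂ ℝ^N with Σ_i ‖ψ_i − φ_i‖² < ε² is also strictly scalable. -/
/-!
Fix `c₀ > 0` with `∑ c₀ᵢ φᵢφᵢᵀ = I`. Because the synthesis operator `c ↦ ∑ cᵢ φᵢφᵢᵀ` of `Φ` maps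
onto the symmetric matrices it has a right inverse `R`, and for `Ψ` near `Φ` the operator
`G ∘ R` (with `G` the synthesis operator of `Ψ`) stays invertible, so
`c = c₀ + R (G R)⁻¹ (I - G c₀)` solves `G c = I`. This `c` depends continuously on `Ψ` and equals
`c₀` at `Φ`, hence stays positive for small perturbations.
-/

open Filter Topology Matrix
-- Any norm on matrices would do; the elementwise sup norm induces the product topology.
open scoped Matrix.Norms.Elementwise

section Perturbation

variable {𝕜 X E F : Type*} [NontriviallyNormedField 𝕜] [TopologicalSpace X]
  [NormedAddCommGroup E] [NormedSpace 𝕜 E] [NormedAddCommGroup F] [NormedSpace 𝕜 F]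

theorem eventually_exists_mem_apply_eq_of_comp_eq_id [CompleteSpace F]
    {T : X → E →L[𝕜] F} {y : X → F} {x₀ : X} {R : F →L[𝕜] E}
    (hT : ContinuousAt T x₀) (hy : ContinuousAt y x₀) (hR : T x₀ ∘L R = .id 𝕜 F)
    {c₀ : E} (hc₀ : T x₀ c₀ = y x₀) {U : Set E} (hU : U ∈ 𝓝 c₀) :
    ∀ᶠ x in 𝓝 x₀, ∃ c ∈ U, T x c = y x := by
  set S : X → F →L[𝕜] F := fun x => T x ∘L R
  have hS : ContinuousAt S x₀ := hT.clm_comp continuousAt_const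
  have hS₀ : S x₀ = ((1 : (F →L[𝕜] F)ˣ) : F →L[𝕜] F) := hR
  set c : X → E := fun x => c₀ + R (Ring.inverse (S x) (y x - T x c₀))
  have hc : ContinuousAt c x₀ := by
    refine continuousAt_const.add (R.continuous.continuousAt.comp (ContinuousAt.clm_apply ?_ ?_))
    · exact (hS₀ ▸ NormedRing.inverse_continuousAt 1).comp hS
    · exact hy.sub (hT.clm_apply continuousAt_const)
  have hcx₀ : c x₀ = c₀ := by simp [c, hS₀, hc₀]
  have hunit : ∀ᶠ x in 𝓝 x₀, IsUnit (S x) :=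
    hS.eventually (Units.isOpen.mem_nhds (hS₀ ▸ isUnit_one))
  filter_upwards [hunit, hc.eventually (hcx₀ ▸ hU)] with x hx hxU
  refine ⟨c x, hxU, ?_⟩
  have hSS : S x (Ring.inverse (S x) (y x - T x c₀)) = y x - T x c₀ := by
    rw [← mul_apply_eq_comp, Ring.mul_inverse_cancel _ hx, one_apply_eq_self]
  simp only [c, map_add]
  rw [show T x (R _) = S x _ from rfl, hSS, add_sub_cancel]

theorem eventually_exists_mem_apply_eq_of_surjective [CompleteSpace 𝕜] [FiniteDimensional 𝕜 F]
    {T : X → E →L[𝕜] F} {y : X → F} {x₀ : X}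
    (hT : ContinuousAt T x₀) (hy : ContinuousAt y x₀) (hsurj : Function.Surjective (T x₀))
    {c₀ : E} (hc₀ : T x₀ c₀ = y x₀) {U : Set E} (hU : U ∈ 𝓝 c₀) :
    ∀ᶠ x in 𝓝 x₀, ∃ c ∈ U, T x c = y x :=
  have : CompleteSpace F := FiniteDimensional.complete 𝕜 F
  let ⟨_, hR⟩ := (T x₀).exists_rightInverse_of_surjective (LinearMap.range_eq_top.2 hsurj)
  eventually_exists_mem_apply_eq_of_comp_eq_id hT hy hR hc₀ hU

end Perturbation

namespace Matrix

variable {n : Type*}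

def symmetricSubmodule (n R : Type*) [Semiring R] : Submodule R (Matrix n n R) where
  carrier := {A | A.IsSymm}
  add_mem' := IsSymm.add
  zero_mem' := isSymm_zero
  smul_mem' c _ h := h.smul c

theorem isSymm_vecMulVec_self {α : Type*} [CommMagma α] (v : n → α) : (vecMulVec v v).IsSymm :=
  transpose_vecMulVec v v

variable {ι : Type*} [Fintype ι]

noncomputable def synthesisOperator (ψ : ι → n → ℝ) :
    (ι → ℝ) →L[ℝ] symmetricSubmodule n ℝ :=
  LinearMap.toContinuousLinearMap <|
    Fintype.linearCombination ℝ fun i => ⟨vecMulVec (ψ i) (ψ i), isSymm_vecMulVec_self (ψ i)⟩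

theorem coe_synthesisOperator_apply (ψ : ι → n → ℝ) (c : ι → ℝ) :
    (synthesisOperator ψ c : Matrix n n ℝ) = ∑ i, c i • vecMulVec (ψ i) (ψ i) := by
  simp [synthesisOperator, Fintype.linearCombination_apply]

theorem synthesisOperator_surjective {φ : ι → n → ℝ}
    (hspan : ∀ A : Matrix n n ℝ, A.IsSymm →
      A ∈ Submodule.span ℝ (Set.range fun i => vecMulVec (φ i) (φ i))) :
    Function.Surjective (synthesisOperator φ) := by
  rintro ⟨A, hA⟩
  obtain ⟨c, hc⟩ := (Submodule.mem_span_range_iff_exists_fun ℝ).1 (hspan A hA)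
  exact ⟨c, Subtype.ext ((coe_synthesisOperator_apply φ c).trans hc)⟩

theorem continuous_synthesisOperator [Fintype n] :
    Continuous (synthesisOperator : (ι → n → ℝ) → _) := by
  refine continuous_clm_apply.2 fun c => continuous_induced_rng.2 ?_
  refine Continuous.congr ?_ fun ψ => (coe_synthesisOperator_apply ψ c).symm
  fun_prop

end Matrix

theorem dist_le_sqrt_sum_sq_sub {ι n : Type*} [Fintype ι] [Fintype n] (ψ φ : ι → n → ℝ) :
    dist ψ φ ≤ √(∑ i, ∑ j, (ψ i j - φ i j) ^ 2) := by
  refine dist_pi_le_iff (Real.sqrt_nonneg _) |>.2 fun i => ?_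
  refine dist_pi_le_iff (Real.sqrt_nonneg _) |>.2 fun j => ?_
  rw [Real.dist_eq]
  refine Real.abs_le_sqrt ?_
  calc (ψ i j - φ i j) ^ 2 ≤ ∑ j, (ψ i j - φ i j) ^ 2 :=
        Finset.single_le_sum (f := fun j => (ψ i j - φ i j) ^ 2)
          (fun _ _ => sq_nonneg _) (Finset.mem_univ j)
    _ ≤ ∑ i, ∑ j, (ψ i j - φ i j) ^ 2 :=
        Finset.single_le_sum (f := fun i => ∑ j, (ψ i j - φ i j) ^ 2)
          (fun _ _ => Finset.sum_nonneg fun _ _ => sq_nonneg _) (Finset.mem_univ i)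

theorem strictly_scalable_open_general (N M : ℕ) (φ : Fin M → Fin N → ℝ)
    (hscal : ∃ c : Fin M → ℝ, (∀ i, 0 < c i) ∧
      ∑ i, c i • Matrix.vecMulVec (φ i) (φ i) = (1 : Matrix (Fin N) (Fin N) ℝ))
    (hspan : ∀ A : Matrix (Fin N) (Fin N) ℝ, A.IsSymm →
      A ∈ Submodule.span ℝ (Set.range fun i => Matrix.vecMulVec (φ i) (φ i))) :
    ∃ ε > 0, ∀ ψ : Fin M → Fin N → ℝ,
      (∑ i, ∑ j, (ψ i j - φ i j) ^ 2) < ε ^ 2 →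
      ∃ c : Fin M → ℝ, (∀ i, 0 < c i) ∧
        ∑ i, c i • Matrix.vecMulVec (ψ i) (ψ i) = (1 : Matrix (Fin N) (Fin N) ℝ) := by
  obtain ⟨c₀, hc₀pos, hc₀⟩ := hscal
  have hsolvable := eventually_exists_mem_apply_eq_of_surjective
    (y := fun _ => (⟨1, isSymm_one⟩ : symmetricSubmodule (Fin N) ℝ))
    continuous_synthesisOperator.continuousAt continuousAt_const
    (synthesisOperator_surjective hspan)
    (Subtype.ext ((coe_synthesisOperator_apply φ c₀).trans hc₀))
    (eventually_all.2 fun i =>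
      (continuous_apply i).continuousAt.eventually (eventually_gt_nhds (hc₀pos i)))
  obtain ⟨ε, hε, hball⟩ := Metric.eventually_nhds_iff.1 hsolvable
  refine ⟨ε, hε, fun ψ hψ => ?_⟩
  obtain ⟨c, hcpos, hc⟩ := hball <|
    (dist_le_sqrt_sum_sq_sub ψ φ).trans_lt ((Real.sqrt_lt' hε).2 hψ)
  exact ⟨c, hcpos, (coe_synthesisOperator_apply ψ c).symm.trans (congrArg Subtype.val hc)⟩

/-- If Φ is a strictly scalable unit-norm frame whose rank-one outer products
span the symmetric matrices, then all sufficiently small perturbations of Φ are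
strictly scalable. -/
theorem strictly_scalable_open (N M : ℕ) (φ : Fin M → Fin N → ℝ)
    (hunit : ∀ i, ∑ j, (φ i j) ^ 2 = 1)
    (hscal : ∃ c : Fin M → ℝ, (∀ i, 0 < c i) ∧
      ∑ i, c i • Matrix.vecMulVec (φ i) (φ i) = (1 : Matrix (Fin N) (Fin N) ℝ))
    (hspan : ∀ A : Matrix (Fin N) (Fin N) ℝ, A.IsSymm →
      A ∈ Submodule.span ℝ (Set.range fun i => Matrix.vecMulVec (φ i) (φ i))) :
    ∃ ε > 0, ∀ ψ : Fin M → Fin N → ℝ,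
      (∑ i, ∑ j, (ψ i j - φ i j) ^ 2) < ε ^ 2 →
      ∃ c : Fin M → ℝ, (∀ i, 0 < c i) ∧
        ∑ i, c i • Matrix.vecMulVec (ψ i) (ψ i) = (1 : Matrix (Fin N) (Fin N) ℝ) :=
  strictly_scalable_open_general N M φ hscal hspan
end
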